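/- Let E, Q be finite-dimensional complex inner product spaces, dim Q = r, f : E → Q surjective with f = Σ f_j ⊗ ε_j in an orthonormal basis, σ_j the minimal dual vectors, F = f₁∧...∧f_r ∈ Λ^r E*, and S ∈ Λ^r E the dual element of F with respect to the induced inner product on Λ^r E (i.e., the minimal-norm element with F(S) = |F|² normalized so that S = conjugate-dual of F). Then |F|² · (σ₁ ∧ ... ∧ σ_r) = S, where |F| is the norm of F in Λ^r E*. -/

import Mathlib

/-!
Since `fⱼ = ⟪vⱼ, ·⟫`, the space `∩ₖ ker fₖ` is the orthogonal complement of `span v`, so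
minimality puts each `σₖ` in `span v`: `σₖ = ∑ₗ Cₖₗ vₗ`. Biorthogonality `⟪vⱼ, σₖ⟫ = δⱼₖ` then
says `G Cᵀ = 1` for the Gram matrix `G` of `v`, and `σ₁ ∧ ⋯ ∧ σ_r = det C · v₁ ∧ ⋯ ∧ v_r` with
`det G · det C = 1`.
-/

open scoped InnerProductSpace
open Finset Submodule

theorem AlternatingMap.map_sum_smul_eq_det_smul {R M N ι : Type*} [CommRing R]
    [AddCommGroup M] [Module R M] [AddCommGroup N] [Module R N] [Fintype ι] [DecidableEq ι]
    (g : M [⋀^ι]→ₗ[R] N) (C : Matrix ι ι R) (w : ι → M) :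
    g (fun k => ∑ l, C k l • w l) = C.det • g w :=
  let perms : Equiv.Perm ι ↪ (ι → ι) := ⟨(⇑), DFunLike.coe_injective⟩
  calc g (fun k => ∑ l, C k l • w l)
      = ∑ p : ι → ι, (∏ k, C k (p k)) • g (w ∘ p) :=
        (g.toMultilinearMap.map_sum _).trans
          (sum_congr rfl fun p _ => g.toMultilinearMap.map_smul_univ _ _)
    _ = ∑ p ∈ univ.map perms, (∏ k, C k (p k)) • g (w ∘ p) := by
        refine (sum_subset (subset_univ _) fun p _ hp => ?_).symm
        obtain ⟨i, j, hpij, hij⟩ : ∃ i j, p i = p j ∧ i ≠ j := by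
          contrapose! hp
          exact mem_map_of_mem perms (mem_univ (Equiv.ofBijective p
            (Finite.injective_iff_bijective.mp fun i j h => hp i j h)))
        rw [g.map_eq_zero_of_eq (w ∘ p) (congrArg w hpij) hij, smul_zero]
    _ = ∑ τ : Equiv.Perm ι, (∏ k, C k (τ k)) • g (w ∘ τ) := sum_map _ _ _
    _ = C.det • g w := by
        rw [← C.det_transpose, Matrix.det_apply, sum_smul]
        refine sum_congr rfl fun τ _ => ?_
        rw [g.map_perm, smul_comm, smul_assoc]
        rfl

section InnerProductSpace

variable {𝕜 E ι : Type*} [RCLike 𝕜] [NormedAddCommGroup E] [InnerProductSpace 𝕜 E]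

theorem iInf_ker_innerₛₗ_eq_orthogonal_span (v : ι → E) :
    ⨅ k, LinearMap.ker (innerₛₗ 𝕜 (v k)) = (span 𝕜 (Set.range v))ᗮ := by
  simp_rw [span_range_eq_iSup, ← iInf_orthogonal]
  congr! 1 with k
  ext x
  simp [mem_orthogonal_singleton_iff_inner_right]

theorem mem_span_of_mem_orthogonal_iInf_ker_innerₛₗ [Finite ι] {v : ι → E} {w : E}
    (hw : w ∈ (⨅ k, LinearMap.ker (innerₛₗ 𝕜 (v k)))ᗮ) : w ∈ span 𝕜 (Set.range v) := by
  have := FiniteDimensional.span_of_finite 𝕜 (Set.finite_range v)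
  rwa [iInf_ker_innerₛₗ_eq_orthogonal_span, orthogonal_orthogonal] at hw

theorem gram_mul_transpose_eq_one [Fintype ι] [DecidableEq ι] {v w : ι → E}
    {C : Matrix ι ι 𝕜} (hw : ∀ k, w k = ∑ l, C k l • v l)
    (hdual : ∀ j k, ⟪v j, w k⟫_𝕜 = if j = k then 1 else 0) :
    Matrix.gram 𝕜 v * C.transpose = 1 := by
  ext j k
  rw [Matrix.one_apply, ← hdual, hw, inner_sum]
  simp [Matrix.mul_apply, Matrix.gram_apply, inner_smul_right, mul_comm]

end InnerProductSpace

/-- `|F|²` is the Gram determinant of the vectors `vⱼ` representing `fⱼ`, and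
`S = f₁* ∧ ⋯ ∧ f_r* = v₁ ∧ ⋯ ∧ v_r`. -/
theorem stmt13_general {E : Type*} [NormedAddCommGroup E] [InnerProductSpace ℂ E]
    {r : ℕ}
    (fj : Fin r → Module.Dual ℂ E)
    (v : Fin r → E) (hv : ∀ j x, fj j x = ⟪v j, x⟫_ℂ)
    (σ : Fin r → E)
    (hdual : ∀ j k, fj j (σ k) = if j = k then 1 else 0)
    (hmin : ∀ j, σ j ∈ (⨅ k, LinearMap.ker (fj k))ᗮ) :
    (Matrix.det (Matrix.of fun j k : Fin r => ⟪v j, v k⟫_ℂ)) •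
        ExteriorAlgebra.ιMulti ℂ r σ
      = ExteriorAlgebra.ιMulti ℂ r v := by
  obtain rfl : fj = fun k => innerₛₗ ℂ (v k) := funext fun k => LinearMap.ext (hv k)
  obtain ⟨C, hC⟩ : ∃ C : Matrix (Fin r) (Fin r) ℂ, ∀ k, σ k = ∑ l, C k l • v l := by
    choose C hC using fun k =>
      (mem_span_range_iff_exists_fun ℂ).mp (mem_span_of_mem_orthogonal_iInf_ker_innerₛₗ (hmin k))
    exact ⟨Matrix.of C, fun k => (hC k).symm⟩
  have hdet : (Matrix.gram ℂ v).det * C.det = 1 := by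
    rw [← Matrix.det_transpose C, ← Matrix.det_mul, gram_mul_transpose_eq_one hC hdual,
      Matrix.det_one]
  change (Matrix.gram ℂ v).det • _ = _
  rw [funext hC, AlternatingMap.map_sum_smul_eq_det_smul, smul_smul, hdet, one_smul]

/-- `|F|² · (σ₁ ∧ ⋯ ∧ σ_r) = S`, where `F = f₁∧⋯∧f_r`, `|F|²` is the Gram determinant
of the dual vectors `vⱼ` of the functionals `fⱼ` (`fⱼ ξ = ⟪vⱼ, ξ⟫`),
`S = f₁* ∧ ⋯ ∧ f_r* = v₁ ∧ ⋯ ∧ v_r` is the conjugate-dual element of `F`, and the `σⱼ`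
are the minimal dual vectors: `fⱼ(σₖ) = δⱼₖ` with `σⱼ ⊥ ∩ₖ ker fₖ`. -/
theorem stmt13 {E : Type*} [NormedAddCommGroup E] [InnerProductSpace ℂ E]
    [FiniteDimensional ℂ E] {r : ℕ}
    (fj : Fin r → Module.Dual ℂ E)
    (v : Fin r → E) (hv : ∀ j x, fj j x = ⟪v j, x⟫_ℂ)
    (σ : Fin r → E)
    (hdual : ∀ j k, fj j (σ k) = if j = k then 1 else 0)
    (hmin : ∀ j, σ j ∈ (⨅ k, LinearMap.ker (fj k))ᗮ) :
    (Matrix.det (Matrix.of fun j k : Fin r => ⟪v j, v k⟫_ℂ)) •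
        ExteriorAlgebra.ιMulti ℂ r σ
      = ExteriorAlgebra.ιMulti ℂ r v :=
  stmt13_general fj v hv σ hdual hmin
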